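/- arXiv:1307.0459 — 7 statements merged into one kernel-verified Lean document; each statement's English description precedes it below -/
import Mathlib

section
/- Let x: N_1 → ℝ^n\{0} and y: N_2 → ℝ^m\{0} be isometric immersions of Riemannian manifolds. Then the pullback of the Euclidean metric on ℝ^{nm} ≅ ℝ^n ⊗ ℝ^m under the tensor product map ψ(u,v) = x(u) ⊗ y(v) equals ρ_2² g_1 + ρ_1² g_2 + 2 ρ_1 ρ_2 dρ_1 ⊗ dρ_2 (symmetrized), where ρ_1 = |x|, ρ_2 = |y| are the Euclidean distance functions from the origin. -/
/-!
Differentiating `ψ(u, v) = x(u) ⊗ y(v)` gives `dψ(X₁, X₂) = x ⊗ dy X₂ + dx X₁ ⊗ y`, and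
`⟪a ⊗ b, c ⊗ d⟫ = ⟪a, c⟫ ⟪b, d⟫` turns `⟪dψ, dψ⟫` into `ρ₂² g₁ + ρ₁² g₂` plus mixed terms
`⟪x, dx X⟫ ⟪y, dy Y⟫`. These are `ρ₁ dρ₁ X · ρ₂ dρ₂ Y`, because `ρ dρ = ⟪x, dx⟫` is half of `d(ρ²)`.
-/

open scoped RealInnerProductSpace

namespace EuclideanSpace

variable {ι κ : Type*} [Fintype ι] [Fintype κ]

noncomputable def tmul :
    EuclideanSpace ℝ ι →L[ℝ] EuclideanSpace ℝ κ →L[ℝ] EuclideanSpace ℝ (ι × κ) :=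
  LinearMap.toContinuousLinearMap <| LinearMap.toContinuousLinearMap.toLinearMap ∘ₗ
    LinearMap.mk₂ ℝ (fun a b => WithLp.toLp 2 fun p => a p.1 * b p.2)
      (fun a a' b => by ext p; simp [add_mul]) (fun r a b => by ext p; simp [mul_assoc])
      (fun a b b' => by ext p; simp [mul_add]) (fun r a b => by ext p; simp [mul_left_comm])

@[simp]
theorem tmul_apply (a : EuclideanSpace ℝ ι) (b : EuclideanSpace ℝ κ) (p : ι × κ) :
    tmul a b p = a p.1 * b p.2 :=
  rfl

theorem inner_tmul_tmul (a c : EuclideanSpace ℝ ι) (b d : EuclideanSpace ℝ κ) :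
    ⟪tmul a b, tmul c d⟫ = ⟪a, c⟫ * ⟪b, d⟫ := by
  simp only [PiLp.inner_apply, RCLike.inner_apply, conj_trivial, tmul_apply,
    Fintype.sum_prod_type, Finset.sum_mul_sum]
  exact Finset.sum_congr rfl fun i _ => Finset.sum_congr rfl fun k _ => by ring

theorem fderiv_tmul_prod_apply {E₁ E₂ : Type*} [NormedAddCommGroup E₁] [NormedSpace ℝ E₁]
    [NormedAddCommGroup E₂] [NormedSpace ℝ E₂] {x : E₁ → EuclideanSpace ℝ ι}
    {y : E₂ → EuclideanSpace ℝ κ} {u : E₁} {v : E₂} (hx : DifferentiableAt ℝ x u)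
    (hy : DifferentiableAt ℝ y v) (Z₁ : E₁) (Z₂ : E₂) :
    fderiv ℝ (fun q : E₁ × E₂ => tmul (x q.1) (y q.2)) (u, v) (Z₁, Z₂) =
      tmul (x u) (fderiv ℝ y v Z₂) + tmul (fderiv ℝ x u Z₁) (y v) := by
  have hx' : HasFDerivAt (fun q : E₁ × E₂ => x q.1)
      ((fderiv ℝ x u).comp (.fst ℝ E₁ E₂)) (u, v) :=
    hx.hasFDerivAt.comp (u, v) hasFDerivAt_fst
  have hy' : HasFDerivAt (fun q : E₁ × E₂ => y q.2)
      ((fderiv ℝ y v).comp (.snd ℝ E₁ E₂)) (u, v) :=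
    hy.hasFDerivAt.comp (u, v) hasFDerivAt_snd
  rw [(tmul.hasFDerivAt_of_bilinear hx' hy').fderiv]
  simp [ContinuousLinearMap.precompR, ContinuousLinearMap.precompL]

end EuclideanSpace

section NormDeriv

variable {E F : Type*} [NormedAddCommGroup E] [NormedSpace ℝ E]
  [NormedAddCommGroup F] [InnerProductSpace ℝ F] {f : E → F} {f' : E →L[ℝ] F} {u : E}

theorem HasFDerivAt.norm_of_ne_zero (hf : HasFDerivAt f f' u) (h0 : f u ≠ 0) :
    HasFDerivAt (‖f ·‖) (‖f u‖⁻¹ • (innerSL ℝ (f u)).comp f') u := by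
  have := hf.norm_sq.sqrt (by positivity)
  simp only [Real.sqrt_sq (norm_nonneg _)] at this
  convert this using 1
  ext X
  simp only [smul_apply, ContinuousLinearMap.comp_apply, coe_innerSL_apply,
    smul_eq_mul, one_div, mul_inv_rev, nsmul_eq_mul, Nat.cast_ofNat]
  field_simp

theorem norm_mul_fderiv_norm_apply (hf : DifferentiableAt ℝ f u) (h0 : f u ≠ 0) (X : E) :
    ‖f u‖ * fderiv ℝ (‖f ·‖) u X = ⟪f u, fderiv ℝ f u X⟫ := by
  rw [(hf.hasFDerivAt.norm_of_ne_zero h0).fderiv]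
  simp [norm_ne_zero_iff.2 h0]

end NormDeriv

/-- The pullback of the Euclidean metric on `ℝ^n ⊗ ℝ^m ≅ ℝ^{nm}` under the tensor
product map `ψ(u,v) = x(u) ⊗ y(v)` of two isometric immersions (here expressed in
local coordinates, so that the metrics `g₁, g₂` are the pullbacks of the Euclidean
metrics under `x` and `y`) equals the convolution metric
`ρ₂² g₁ + ρ₁² g₂ + 2 ρ₁ ρ₂ dρ₁ ⊙ dρ₂`, where `ρ₁ = |x|`, `ρ₂ = |y|`. -/
theorem pullback_of_tensor_product_map_is_convolution (n m : ℕ)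
    {E1 E2 : Type*} [NormedAddCommGroup E1] [NormedSpace ℝ E1]
    [NormedAddCommGroup E2] [NormedSpace ℝ E2]
    (x : E1 → EuclideanSpace ℝ (Fin n)) (y : E2 → EuclideanSpace ℝ (Fin m))
    (hx : Differentiable ℝ x) (hy : Differentiable ℝ y)
    (u : E1) (v : E2) (hxu : x u ≠ 0) (hyv : y v ≠ 0)
    (X1 Y1 : E1) (X2 Y2 : E2) :
    let ψ : E1 × E2 → EuclideanSpace ℝ (Fin n × Fin m) :=
      fun q => WithLp.toLp 2 (fun (jα : Fin n × Fin m) => x q.1 jα.1 * y q.2 jα.2)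
    let ρ1 : E1 → ℝ := fun u' => ‖x u'‖
    let ρ2 : E2 → ℝ := fun v' => ‖y v'‖
    (inner ℝ (fderiv ℝ ψ (u, v) (X1, X2)) (fderiv ℝ ψ (u, v) (Y1, Y2)) : ℝ) =
      (ρ2 v) ^ 2 * (inner ℝ (fderiv ℝ x u X1) (fderiv ℝ x u Y1) : ℝ)
      + (ρ1 u) ^ 2 * (inner ℝ (fderiv ℝ y v X2) (fderiv ℝ y v Y2) : ℝ)
      + (ρ1 u) * (ρ2 v) *
          (fderiv ℝ ρ1 u X1 * fderiv ℝ ρ2 v Y2 + fderiv ℝ ρ1 u Y1 * fderiv ℝ ρ2 v X2) := by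
  intro ψ ρ1 ρ2
  have hψ : ψ = fun q => EuclideanSpace.tmul (x q.1) (y q.2) := rfl
  rw [hψ, EuclideanSpace.fderiv_tmul_prod_apply (hx u) (hy v),
    EuclideanSpace.fderiv_tmul_prod_apply (hx u) (hy v)]
  simp only [inner_add_left, inner_add_right, EuclideanSpace.inner_tmul_tmul,
    real_inner_self_eq_norm_sq]
  have hρ1 (Z : E1) : ρ1 u * fderiv ℝ ρ1 u Z = ⟪x u, fderiv ℝ x u Z⟫ :=
    norm_mul_fderiv_norm_apply (hx u) hxu Z
  have hρ2 (Z : E2) : ρ2 v * fderiv ℝ ρ2 v Z = ⟪y v, fderiv ℝ y v Z⟫ :=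
    norm_mul_fderiv_norm_apply (hy v) hyv Z
  have hcross : ρ1 u * ρ2 v *
      (fderiv ℝ ρ1 u X1 * fderiv ℝ ρ2 v Y2 + fderiv ℝ ρ1 u Y1 * fderiv ℝ ρ2 v X2) =
      ⟪x u, fderiv ℝ x u X1⟫ * ⟪y v, fderiv ℝ y v Y2⟫ +
        ⟪x u, fderiv ℝ x u Y1⟫ * ⟪y v, fderiv ℝ y v X2⟫ := by
    rw [← hρ1, ← hρ1, ← hρ2, ← hρ2]
    ring
  rw [hcross, real_inner_comm (x u), real_inner_comm (y v) (fderiv ℝ y v X2)]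
  ring
end

section
/- Let (N_1,g_1) and (N_2,g_2) be Riemannian manifolds with positive smooth functions f on N_1 and h on N_2. The convolution tensor {}_h g_1 *_f g_2 = h² g_1 + f² g_2 + 2fh df ⊙ dh is a positive-definite symmetric (0,2)-tensor on N_1 × N_2 (i.e., a Riemannian metric) if and only if |grad f|_1 · |grad h|_2 < 1 at every point, where |grad f|_1 is the length of the gradient of f with respect to g_1 and |grad h|_2 the length of the gradient of h with respect to g_2. -/
/-!
Rescaling `X = (x, y)` to `(h • x, f • y)` turns the convolution tensor into the form
`‖u‖² + ‖v‖² + 2 df(u) dh(v)`, so `f` and `h` drop out. Since `|df(u) dh(v)| ≤ ‖df‖ ‖dh‖ ‖u‖ ‖v‖`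
and `2 ‖u‖ ‖v‖ ≤ ‖u‖² + ‖v‖²`, that form is at least `(1 - ‖df‖ ‖dh‖)(‖u‖² + ‖v‖²)`. Conversely,
if `a = ‖df‖`, `b = ‖dh‖` and `ab ≥ 1`, the Riesz representatives `u₀, v₀` of `df, dh` give the
vector `(-b u₀, a v₀)`, on which the form equals `2a²b²(1 - ab) ≤ 0`.
-/

section ConvolutionForm

variable {E F : Type*} [SeminormedAddCommGroup E] [NormedSpace ℝ E] [SeminormedAddCommGroup F] [NormedSpace ℝ F]

/-- The convolution tensor with `f = h = 1`. -/
def convolutionForm (φ : E →L[ℝ] ℝ) (ψ : F →L[ℝ] ℝ) (p : E × F) : ℝ :=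
  ‖p.1‖ ^ 2 + ‖p.2‖ ^ 2 + 2 * (φ p.1 * ψ p.2)

theorem convolutionForm_smul (φ : E →L[ℝ] ℝ) (ψ : F →L[ℝ] ℝ) (f h : ℝ) (x : E) (y : F) :
    convolutionForm φ ψ (h • x, f • y) =
      h ^ 2 * ‖x‖ ^ 2 + f ^ 2 * ‖y‖ ^ 2 + 2 * f * h * (φ x * ψ y) := by
  simp only [convolutionForm, norm_smul, map_smul, smul_eq_mul, mul_pow, Real.norm_eq_abs, sq_abs]
  ring

theorem sub_mul_le_convolutionForm (φ : E →L[ℝ] ℝ) (ψ : F →L[ℝ] ℝ) (p : E × F) :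
    (1 - ‖φ‖ * ‖ψ‖) * (‖p.1‖ ^ 2 + ‖p.2‖ ^ 2) ≤ convolutionForm φ ψ p := by
  have hcross : |φ p.1 * ψ p.2| ≤ ‖φ‖ * ‖ψ‖ * (‖p.1‖ * ‖p.2‖) := by
    rw [abs_mul, mul_mul_mul_comm]
    exact mul_le_mul (φ.le_opNorm p.1) (ψ.le_opNorm p.2) (abs_nonneg _) (by positivity)
  have hamgm : 0 ≤ ‖φ‖ * ‖ψ‖ * (‖p.1‖ - ‖p.2‖) ^ 2 := by positivity
  unfold convolutionForm
  nlinarith [neg_abs_le (φ p.1 * ψ p.2)]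

end ConvolutionForm

section Normed

variable {E F : Type*} [NormedAddCommGroup E] [NormedAddCommGroup F]

theorem convolutionForm_pos [NormedSpace ℝ E] [NormedSpace ℝ F] {φ : E →L[ℝ] ℝ}
    {ψ : F →L[ℝ] ℝ} (hφψ : ‖φ‖ * ‖ψ‖ < 1) {p : E × F} (hp : p ≠ 0) :
    0 < convolutionForm φ ψ p := by
  have hnorm : 0 < ‖p.1‖ ^ 2 + ‖p.2‖ ^ 2 := by
    have hcomp : p.1 ≠ 0 ∨ p.2 ≠ 0 := by
      contrapose! hp
      exact Prod.ext hp.1 hp.2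
    rcases hcomp with h1 | h2
    · exact add_pos_of_pos_of_nonneg (pow_pos (norm_pos_iff.mpr h1) 2) (sq_nonneg _)
    · exact add_pos_of_nonneg_of_pos (sq_nonneg _) (pow_pos (norm_pos_iff.mpr h2) 2)
  exact (mul_pos (sub_pos.mpr hφψ) hnorm).trans_le (sub_mul_le_convolutionForm φ ψ p)

variable [InnerProductSpace ℝ E] [CompleteSpace E] [InnerProductSpace ℝ F] [CompleteSpace F]

theorem ContinuousLinearMap.exists_norm_eq_and_apply_eq_norm_sq (φ : E →L[ℝ] ℝ) :
    ∃ u : E, ‖u‖ = ‖φ‖ ∧ φ u = ‖φ‖ ^ 2 := by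
  set u := (InnerProductSpace.toDual ℝ E).symm φ
  have hu : ‖u‖ = ‖φ‖ := (InnerProductSpace.toDual ℝ E).symm.norm_map φ
  refine ⟨u, hu, ?_⟩
  rw [← InnerProductSpace.toDual_symm_apply, real_inner_self_eq_norm_sq, hu]

theorem exists_convolutionForm_nonpos {φ : E →L[ℝ] ℝ} {ψ : F →L[ℝ] ℝ}
    (hφψ : 1 ≤ ‖φ‖ * ‖ψ‖) : ∃ p : E × F, p ≠ 0 ∧ convolutionForm φ ψ p ≤ 0 := by
  obtain ⟨u, hu, hφu⟩ := φ.exists_norm_eq_and_apply_eq_norm_sq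
  obtain ⟨v, hv, hψv⟩ := ψ.exists_norm_eq_and_apply_eq_norm_sq
  set a := ‖φ‖
  set b := ‖ψ‖
  have ha : 0 < a := pos_of_mul_pos_left (one_pos.trans_le hφψ) (norm_nonneg ψ)
  have hb : 0 < b := pos_of_mul_pos_right (one_pos.trans_le hφψ) (norm_nonneg φ)
  refine ⟨(-b • u, a • v), fun h0 => ?_, ?_⟩
  · have hv0 : a • v = 0 := congrArg Prod.snd h0
    have hv_ne : v ≠ 0 := by rw [← norm_ne_zero_iff, hv]; exact hb.ne'
    exact smul_ne_zero ha.ne' hv_ne hv0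
  · have hform : convolutionForm φ ψ (-b • u, a • v) = 2 * (a * b) ^ 2 * (1 - a * b) := by
      simp only [convolutionForm, norm_smul, map_smul, smul_eq_mul, hu, hv, hφu, hψv,
        Real.norm_eq_abs, abs_neg, abs_of_pos ha, abs_of_pos hb]
      ring
    rw [hform]
    exact mul_nonpos_of_nonneg_of_nonpos (by positivity) (by linarith)

theorem forall_convolutionForm_pos_iff (φ : E →L[ℝ] ℝ) (ψ : F →L[ℝ] ℝ) :
    (∀ p : E × F, p ≠ 0 → 0 < convolutionForm φ ψ p) ↔ ‖φ‖ * ‖ψ‖ < 1 := by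
  refine ⟨fun hpos => ?_, fun hφψ _ => convolutionForm_pos hφψ⟩
  by_contra! hφψ
  obtain ⟨p, hp, hle⟩ := exists_convolutionForm_nonpos hφψ
  exact (hpos p hp).not_ge hle

end Normed

/-- (Pointwise form.) The convolution tensor `h² g₁ + f² g₂ + 2fh df ⊙ dh` of two
Riemannian metrics, evaluated at a point (with tangent spaces `T1`, `T2`, values
`f, h > 0` and differentials `df, dh`), is positive definite if and only if
`|grad f|₁ · |grad h|₂ < 1` there; the gradient lengths are the operator norms of the
differentials. -/
theorem convolution_metric_positive_definite_iff
    {T1 T2 : Type*} [NormedAddCommGroup T1] [InnerProductSpace ℝ T1] [FiniteDimensional ℝ T1]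
    [NormedAddCommGroup T2] [InnerProductSpace ℝ T2] [FiniteDimensional ℝ T2]
    (f h : ℝ) (hf : 0 < f) (hh : 0 < h) (df : T1 →L[ℝ] ℝ) (dh : T2 →L[ℝ] ℝ) :
    (∀ X : T1 × T2, X ≠ 0 →
        0 < h ^ 2 * ‖X.1‖ ^ 2 + f ^ 2 * ‖X.2‖ ^ 2 + 2 * f * h * (df X.1 * dh X.2)) ↔
      ‖df‖ * ‖dh‖ < 1 := by
  let e : (T1 × T2) ≃ₗ[ℝ] T1 × T2 :=
    (LinearEquiv.smulOfNeZero ℝ T1 h hh.ne').prodCongr (LinearEquiv.smulOfNeZero ℝ T2 f hf.ne')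
  calc (∀ X : T1 × T2, X ≠ 0 →
          0 < h ^ 2 * ‖X.1‖ ^ 2 + f ^ 2 * ‖X.2‖ ^ 2 + 2 * f * h * (df X.1 * dh X.2))
      ↔ ∀ X : T1 × T2, X ≠ 0 → 0 < convolutionForm df dh (e X) := by
        simp only [e, LinearEquiv.prodCongr_apply, LinearEquiv.smulOfNeZero_apply,
          convolutionForm_smul]
    _ ↔ ∀ p : T1 × T2, p ≠ 0 → 0 < convolutionForm df dh p :=
        ⟨fun H p hp => by simpa using H (e.symm p) (by simpa using hp),
          fun H X hX => H (e X) (by simpa using hX)⟩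
    _ ↔ ‖df‖ * ‖dh‖ < 1 := forall_convolutionForm_pos_iff df dh
end

section
/- Let x: (N_1,g_1) → ℝ^n\{0} be an isometric immersion and y: (N_2,g_2) → S^{m-1}(1) ⊂ ℝ^m an isometric immersion into the unit sphere centered at the origin. Then the convolution metric induced by the map (u,v) ↦ x(u) ⊗ y(v) on N_1 × N_2 equals the warped product metric g_1 + |x|² g_2. -/
/-! The differential of `ψ = x ⊗ y` is `dψ(X₁, X₂) = x ⊗ dy(X₂) + dx(X₁) ⊗ y`, and
`⟪a ⊗ b, c ⊗ d⟫ = ⟪a, c⟫ ⟪b, d⟫`. Since `‖y‖` is constant, `dy` is orthogonal to `y`, which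
kills the two cross terms, and `‖y‖ = 1` leaves exactly `⟪dx X₁, dx Y₁⟫ + ‖x‖² ⟪dy X₂, dy Y₂⟫`. -/

open scoped InnerProductSpace

section OuterProduct

variable {ι κ : Type*} [Fintype ι] [Fintype κ]

noncomputable def EuclideanSpace.outerProd :
    EuclideanSpace ℝ ι →L[ℝ] EuclideanSpace ℝ κ →L[ℝ] EuclideanSpace ℝ (ι × κ) :=
  LinearMap.toContinuousLinearMap <| LinearMap.toContinuousLinearMap.toLinearMap ∘ₗ
    LinearMap.mk₂ ℝ
      (fun (a : EuclideanSpace ℝ ι) (b : EuclideanSpace ℝ κ) =>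
        WithLp.toLp 2 fun p : ι × κ => a p.1 * b p.2)
      (fun a a' b => by ext p; simp [add_mul])
      (fun c a b => by ext p; simp [mul_assoc])
      (fun a b b' => by ext p; simp [mul_add])
      (fun c a b => by ext p; simp [mul_left_comm])

@[simp]
theorem EuclideanSpace.outerProd_apply (a : EuclideanSpace ℝ ι) (b : EuclideanSpace ℝ κ) :
    outerProd a b = WithLp.toLp 2 fun p : ι × κ => a p.1 * b p.2 := rfl

theorem EuclideanSpace.inner_outerProd_outerProd (a c : EuclideanSpace ℝ ι)
    (b d : EuclideanSpace ℝ κ) : ⟪outerProd a b, outerProd c d⟫_ℝ = ⟪a, c⟫_ℝ * ⟪b, d⟫_ℝ := by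
  simp only [outerProd_apply, PiLp.inner_apply, RCLike.inner_apply, conj_trivial,
    Fintype.sum_prod_type, Finset.sum_mul_sum]
  exact Finset.sum_congr rfl fun i _ => Finset.sum_congr rfl fun k _ => by ring

end OuterProduct

theorem fderiv_bilinear_comp_prodMap_apply {E1 E2 E F G : Type*}
    [NormedAddCommGroup E1] [NormedSpace ℝ E1] [NormedAddCommGroup E2] [NormedSpace ℝ E2]
    [NormedAddCommGroup E] [NormedSpace ℝ E] [NormedAddCommGroup F] [NormedSpace ℝ F]
    [NormedAddCommGroup G] [NormedSpace ℝ G]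
    (B : E →L[ℝ] F →L[ℝ] G) {f : E1 → E} {g : E2 → F} {u : E1} {v : E2}
    (hf : DifferentiableAt ℝ f u) (hg : DifferentiableAt ℝ g v) (X1 : E1) (X2 : E2) :
    fderiv ℝ (fun q : E1 × E2 => B (f q.1) (g q.2)) (u, v) (X1, X2) =
      B (f u) (fderiv ℝ g v X2) + B (fderiv ℝ f u X1) (g v) := by
  have h : HasFDerivAt (fun q : E1 × E2 => B (f q.1) (g q.2)) _ (u, v) :=
    B.hasFDerivAt_of_bilinear (hf.hasFDerivAt.comp (u, v) hasFDerivAt_fst)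
      (hg.hasFDerivAt.comp (u, v) hasFDerivAt_snd)
  rw [h.fderiv]
  simp

theorem inner_fderiv_eq_zero_of_norm_eq_const {E F : Type*}
    [NormedAddCommGroup E] [NormedSpace ℝ E] [NormedAddCommGroup F] [InnerProductSpace ℝ F]
    {f : E → F} {c : ℝ} (hf : ∀ w, ‖f w‖ = c) {v : E} (hfv : DifferentiableAt ℝ f v) (W : E) :
    ⟪f v, fderiv ℝ f v W⟫_ℝ = 0 := by
  have hconst : HasFDerivAt (‖f ·‖ ^ 2) (0 : E →L[ℝ] ℝ) v := by
    simpa only [hf] using hasFDerivAt_const (c ^ 2) v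
  have h := congrArg (· W) (hfv.hasFDerivAt.norm_sq.unique hconst)
  simpa using h

theorem tensor_with_spherical_factor_is_warped_product_general (n m : ℕ)
    {E1 E2 : Type*} [NormedAddCommGroup E1] [NormedSpace ℝ E1]
    [NormedAddCommGroup E2] [NormedSpace ℝ E2]
    (x : E1 → EuclideanSpace ℝ (Fin n)) (y : E2 → EuclideanSpace ℝ (Fin m))
    (hx : Differentiable ℝ x) (hy : Differentiable ℝ y)
    (hy1 : ∀ v, ‖y v‖ = 1)
    (u : E1) (v : E2) (X1 Y1 : E1) (X2 Y2 : E2) :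
    let ψ : E1 × E2 → EuclideanSpace ℝ (Fin n × Fin m) :=
      fun q => WithLp.toLp 2 (fun jα : Fin n × Fin m => x q.1 jα.1 * y q.2 jα.2)
    (inner ℝ (fderiv ℝ ψ (u, v) (X1, X2)) (fderiv ℝ ψ (u, v) (Y1, Y2)) : ℝ) =
      (inner ℝ (fderiv ℝ x u X1) (fderiv ℝ x u Y1) : ℝ)
        + ‖x u‖ ^ 2 * (inner ℝ (fderiv ℝ y v X2) (fderiv ℝ y v Y2) : ℝ) := by
  intro ψ
  have hψ (W1 : E1) (W2 : E2) : fderiv ℝ ψ (u, v) (W1, W2) =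
      EuclideanSpace.outerProd (x u) (fderiv ℝ y v W2)
        + EuclideanSpace.outerProd (fderiv ℝ x u W1) (y v) :=
    fderiv_bilinear_comp_prodMap_apply EuclideanSpace.outerProd (hx u) (hy v) W1 W2
  have hyX2 := inner_fderiv_eq_zero_of_norm_eq_const hy1 (hy v) X2
  have hyY2 := inner_fderiv_eq_zero_of_norm_eq_const hy1 (hy v) Y2
  rw [hψ, hψ]
  simp only [inner_add_left, inner_add_right, EuclideanSpace.inner_outerProd_outerProd,
    real_inner_self_eq_norm_sq]
  rw [real_inner_comm (y v), hyX2, hyY2, hy1]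
  ring

/-- If `x : N₁ → ℝⁿ \ {0}` is an isometric immersion and `y : N₂ → S^{m-1}(1) ⊂ ℝᵐ`
is an isometric immersion into the unit sphere, then the convolution metric induced by
`(u,v) ↦ x(u) ⊗ y(v)` equals the warped product metric `g₁ + |x|² g₂` (expressed here in
local coordinates, the metrics `g₁, g₂` being the pullbacks of the Euclidean metrics). -/
theorem tensor_with_spherical_factor_is_warped_product (n m : ℕ)
    {E1 E2 : Type*} [NormedAddCommGroup E1] [NormedSpace ℝ E1]
    [NormedAddCommGroup E2] [NormedSpace ℝ E2]
    (x : E1 → EuclideanSpace ℝ (Fin n)) (y : E2 → EuclideanSpace ℝ (Fin m))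
    (hx : Differentiable ℝ x) (hy : Differentiable ℝ y)
    (hx0 : ∀ u, x u ≠ 0) (hy1 : ∀ v, ‖y v‖ = 1)
    (u : E1) (v : E2) (X1 Y1 : E1) (X2 Y2 : E2) :
    let ψ : E1 × E2 → EuclideanSpace ℝ (Fin n × Fin m) :=
      fun q => WithLp.toLp 2 (fun jα : Fin n × Fin m => x q.1 jα.1 * y q.2 jα.2)
    (inner ℝ (fderiv ℝ ψ (u, v) (X1, X2)) (fderiv ℝ ψ (u, v) (Y1, Y2)) : ℝ) =
      (inner ℝ (fderiv ℝ x u X1) (fderiv ℝ x u Y1) : ℝ)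
        + ‖x u‖ ^ 2 * (inner ℝ (fderiv ℝ y v X2) (fderiv ℝ y v Y2) : ℝ) :=
  tensor_with_spherical_factor_is_warped_product_general n m x y hx hy hy1 u v X1 Y1 X2 Y2
end

section
/- Conversely, if z: I → S³(c) ⊂ ℂ² is a unit speed Legendre curve (⟨z',iz⟩ = 0 identically, ⟨z',z'⟩ = 1, ⟨z,z⟩ = 1/c), then there exists a real-valued function λ on I such that z''(t) − iλ(t) z'(t) + c z(t) = 0. -/
/-!
Differentiating `‖z‖² = 1/c` gives `Re⟪z', z⟫ = 0`, while the Legendre condition says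
`Im⟪z', z⟫ = 0`; so `z` and `z'` are Hermitian-orthogonal and, being nonzero, form an orthogonal
basis of `ℂ²`. Differentiating `⟪z', z⟫ = 0` gives `⟪z'', z⟫ = -‖z'‖² = -1`, and `‖z'‖ = 1` makes
`⟪z', z''⟫` purely imaginary, say `iλ`. Expanding `z''` in the basis gives `z'' = -c z + iλ z'`.
-/

open Filter Topology Module Submodule RCLike
open scoped InnerProductSpace

section InnerProductSpace

variable {𝕜 E : Type*} [RCLike 𝕜] [NormedAddCommGroup E] [InnerProductSpace 𝕜 E]

theorem eq_zero_of_inner_eq_zero_of_finrank_eq_two (hE : finrank 𝕜 E = 2) {x y u : E}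
    (hx : x ≠ 0) (hy : y ≠ 0) (hxy : ⟪x, y⟫_𝕜 = 0) (hxu : ⟪x, u⟫_𝕜 = 0) (hyu : ⟪y, u⟫_𝕜 = 0) :
    u = 0 := by
  have hindep : LinearIndependent 𝕜 ![x, y] := by
    refine linearIndependent_of_ne_zero_of_inner_eq_zero (by simp [Fin.forall_fin_two, hx, hy]) ?_
    intro i j hij
    fin_cases i <;> fin_cases j <;> simp_all [inner_eq_zero_symm]
  have hspan : span 𝕜 (Set.range ![x, y]) = ⊤ :=
    hindep.span_eq_top_of_card_eq_finrank (by simp [hE])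
  have hortho : span 𝕜 (Set.range ![x, y]) ⟂ (𝕜 ∙ u) := by
    simp [isOrtho_span, hxu, hyu]
  rwa [hspan, isOrtho_top_left, span_singleton_eq_bot] at hortho

theorem inner_self_eq_ofReal_of_re_eq {x : E} {r : ℝ} (h : re ⟪x, x⟫_𝕜 = r) : ⟪x, x⟫_𝕜 = r := by
  rw [← inner_self_ofReal_re, h]

variable [NormedSpace ℝ E] {f g : ℝ → E} {f' g' : E} {t : ℝ}

theorem HasDerivAt.inner_add_inner_eq_zero (hf : HasDerivAt f f' t) (hg : HasDerivAt g g' t)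
    {a : 𝕜} (h : ∀ᶠ r in 𝓝 t, ⟪f r, g r⟫_𝕜 = a) : ⟪f t, g'⟫_𝕜 + ⟪f', g t⟫_𝕜 = 0 :=
  (hf.inner 𝕜 hg).unique ((hasDerivAt_const t a).congr_of_eventuallyEq h)

theorem HasDerivAt.re_inner_self_eq_zero (hf : HasDerivAt f f' t) {a : ℝ}
    (h : ∀ᶠ r in 𝓝 t, re ⟪f r, f r⟫_𝕜 = a) : re ⟪f t, f'⟫_𝕜 = 0 := by
  have hsum := congrArg re
    (hf.inner_add_inner_eq_zero hf (h.mono fun _ => inner_self_eq_ofReal_of_re_eq))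
  rw [map_add, inner_re_symm f', map_zero] at hsum
  linarith

end InnerProductSpace

section Legendre

variable {E : Type*} [NormedAddCommGroup E] [InnerProductSpace ℂ E]

theorem HasDerivAt.inner_eq_zero_of_re_inner_I_smul_eq_zero {z : ℝ → E} {z' : E} {t a : ℝ}
    (hz : HasDerivAt z z' t) (hsphere : ∀ᶠ r in 𝓝 t, (⟪z r, z r⟫_ℂ).re = a)
    (hLegendre : (⟪z', Complex.I • z t⟫_ℂ).re = 0) : ⟪z', z t⟫_ℂ = 0 := by
  have hre := hz.re_inner_self_eq_zero (𝕜 := ℂ) hsphere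
  rw [inner_re_symm] at hre
  rw [inner_smul_right] at hLegendre
  apply Complex.ext <;> simp_all

theorem legendre_frame_relation (hE : finrank ℂ E = 2) {c : ℝ} (hc : c ≠ 0) {x v a : E}
    (hx : (⟪x, x⟫_ℂ).re = 1 / c) (hv : (⟪v, v⟫_ℂ).re = 1) (hvx : ⟪v, x⟫_ℂ = 0)
    (hax : ⟪a, x⟫_ℂ = -1) (hva : (⟪v, a⟫_ℂ).re = 0) :
    a - ((⟪v, a⟫_ℂ).im * Complex.I) • v + (c : ℂ) • x = 0 := by
  have hx0 : x ≠ 0 := by rintro rfl; simp at hx; exact hc hx.symm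
  have hv0 : v ≠ 0 := by rintro rfl; simp at hv
  have hxx : ⟪x, x⟫_ℂ = (1 / c : ℝ) := inner_self_eq_ofReal_of_re_eq hx
  have hvv : ⟪v, v⟫_ℂ = 1 := by simpa using inner_self_eq_ofReal_of_re_eq (𝕜 := ℂ) hv
  have hxa : ⟪x, a⟫_ℂ = -1 := by rw [← inner_conj_symm, hax]; simp
  have hva' : ⟪v, a⟫_ℂ = (⟪v, a⟫_ℂ).im * Complex.I := by
    conv_lhs => rw [← Complex.re_add_im ⟪v, a⟫_ℂ, hva]
    simp
  refine eq_zero_of_inner_eq_zero_of_finrank_eq_two hE hx0 hv0 (inner_eq_zero_symm.1 hvx) ?_ ?_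
  · rw [inner_add_right, inner_sub_right, inner_smul_right, inner_smul_right, hxa, hxx,
      inner_eq_zero_symm.1 hvx]
    have hc' : (c : ℂ) ≠ 0 := Complex.ofReal_ne_zero.2 hc
    push_cast
    field_simp
    ring
  · rw [inner_add_right, inner_sub_right, inner_smul_right, inner_smul_right, hvv, hvx, ← hva']
    ring

end Legendre

/-- Conversely, a unit speed Legendre curve `z : I → S³(c) ⊂ ℂ²` satisfies the
differential equation `z'' - iλ z' + c z = 0` for some real-valued function `λ` on `I`. -/
theorem legendre_implies_ode (c : ℝ) (hc : 0 < c) (I : Set ℝ) (hI : IsOpen I)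
    (z zp zpp : ℝ → EuclideanSpace ℂ (Fin 2))
    (hz : ∀ t ∈ I, HasDerivAt z (zp t) t)
    (hzp : ∀ t ∈ I, HasDerivAt zp (zpp t) t)
    (hsphere : ∀ t ∈ I, ((inner ℂ (z t) (z t) : ℂ)).re = 1 / c)
    (hunit : ∀ t ∈ I, ((inner ℂ (zp t) (zp t) : ℂ)).re = 1)
    (hLegendre : ∀ t ∈ I, ((inner ℂ (zp t) (Complex.I • z t) : ℂ)).re = 0) :
    ∃ lam : ℝ → ℝ, ∀ t ∈ I,
      zpp t - (((lam t : ℂ)) * Complex.I) • zp t + (c : ℂ) • z t = 0 := by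
  have hnhds : ∀ t ∈ I, ∀ᶠ r in 𝓝 t, r ∈ I := fun t ht => hI.mem_nhds ht
  have horth : ∀ t ∈ I, ⟪zp t, z t⟫_ℂ = 0 := fun t ht =>
    (hz t ht).inner_eq_zero_of_re_inner_I_smul_eq_zero ((hnhds t ht).mono hsphere)
      (hLegendre t ht)
  refine ⟨fun t => (⟪zp t, zpp t⟫_ℂ).im, fun t ht => ?_⟩
  have hzpp_z : ⟪zpp t, z t⟫_ℂ = -1 := by
    have hsum := (hzp t ht).inner_add_inner_eq_zero (hz t ht) ((hnhds t ht).mono horth)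
    rw [inner_self_eq_ofReal_of_re_eq (𝕜 := ℂ) (hunit t ht), RCLike.ofReal_one] at hsum
    linear_combination hsum
  exact legendre_frame_relation finrank_euclideanSpace_fin hc.ne' (hsphere t ht) (hunit t ht)
    (horth t ht) hzpp_z ((hzp t ht).re_inner_self_eq_zero (𝕜 := ℂ) ((hnhds t ht).mono hunit))
end

section
/- The Whitney map w: S^n → ℂ^n defined by w(y_0, y_1, ..., y_n) = ((1 + i y_0)/(1 + y_0²)) · (y_1, ..., y_n), for (y_0,...,y_n) ∈ ℝ^{n+1} with y_0² + y_1² + ⋯ + y_n² = 1, is an immersion of the unit n-sphere into ℂ^n, and it is Lagrangian: for every point p ∈ S^n and all tangent vectors X, Y ∈ T_p S^n, the Kähler form ω(dw(X), dw(Y)) = 0, where ω(u,v) = ⟨iu, v⟩ on ℂ^n. -/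
/-!
Write the Whitney map as `W q = f q₀ • q'` with `f t = (1 - i t)⁻¹` and `q' ∈ ℝⁿ ⊆ ℂⁿ`, so that
`dW X = f p₀ • X' + f' • X₀ p'` where `f' = i f²`. On real vectors the Kähler form is
`ω(a u, b v) = Im(conj a · b) ⟨u, v⟩`, hence
`ω(dW X, dW Y) = Im(conj f · f') (Y₀ ⟨X', p'⟩ - X₀ ⟨p', Y'⟩)`, which vanishes because tangency reads
`⟨p', X'⟩ = -p₀ X₀`. Since `Im(conj f · f') = |f|² Re f > 0`, the scalars `f` and `f'` are
`ℝ`-independent, so `dW X = 0` forces `X' = 0` and `X₀ p' = 0`; at the poles `p' = 0`, where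
`p₀ = ±1`, tangency gives `X₀ = 0`.
-/

open Complex ComplexConjugate

section Complexify

variable {ι : Type*} [Fintype ι]

noncomputable def complexify : EuclideanSpace ℝ ι →L[ℝ] EuclideanSpace ℂ ι :=
  LinearMap.toContinuousLinearMap
    { toFun := fun v => WithLp.toLp 2 fun j => (v j : ℂ)
      map_add' := fun u v => by ext j; simp
      map_smul' := fun r v => by ext j; simp }

@[simp]
theorem complexify_apply (v : EuclideanSpace ℝ ι) (j : ι) : complexify v j = (v j : ℂ) := rfl

theorem inner_complexify (u v : EuclideanSpace ℝ ι) :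
    inner ℂ (complexify u) (complexify v) = (inner ℝ u v : ℂ) := by
  simp [PiLp.inner_apply, mul_comm]

theorem re_inner_I_smul_complexify (a b : ℂ) (u v : EuclideanSpace ℝ ι) :
    (inner ℂ (I • (a • complexify u)) (b • complexify v)).re = (conj a * b).im * inner ℝ u v := by
  rw [smul_smul, inner_smul_left, inner_smul_right, inner_complexify, map_mul, conj_I,
    show -I * conj a * (b * inner ℝ u v) = -(conj a * b * inner ℝ u v * I) by ring,
    neg_re, mul_I_re, neg_neg, im_mul_ofReal]

theorem re_inner_I_smul_complexify_add (a b : ℂ) (u v u' v' : EuclideanSpace ℝ ι) :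
    (inner ℂ (I • (a • complexify u + b • complexify v)) (a • complexify u' + b • complexify v')).re
      = (conj a * b).im * (inner ℝ u v' - inner ℝ v u') := by
  simp only [smul_add, inner_add_left, inner_add_right, add_re, re_inner_I_smul_complexify, mul_im,
    conj_re, conj_im]
  ring

theorem eq_zero_of_smul_complexify_add_eq_zero {a b : ℂ} (hab : (conj a * b).im ≠ 0)
    {u v : EuclideanSpace ℝ ι} (h : a • complexify u + b • complexify v = 0) : u = 0 ∧ v = 0 := by
  have hj (j : ι) : a.re * u j + b.re * v j = 0 ∧ a.im * u j + b.im * v j = 0 := by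
    have := congrArg (· j) h
    simp only [PiLp.add_apply, PiLp.smul_apply, PiLp.zero_apply, complexify_apply, smul_eq_mul,
      Complex.ext_iff, add_re, add_im, mul_re, mul_im, ofReal_re, ofReal_im, zero_re, zero_im,
      mul_zero, sub_zero] at this
    constructor <;> linarith [this.1, this.2]
  have hdet : a.re * b.im - a.im * b.re ≠ 0 := by
    rwa [show (conj a * b).im = a.re * b.im - a.im * b.re by simp only [mul_im, conj_re, conj_im]; ring] at hab
  constructor <;> ext j <;> apply (mul_eq_zero.1 _).resolve_left hdet
  · linear_combination b.im * (hj j).1 - b.re * (hj j).2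
  · linear_combination a.re * (hj j).2 - a.im * (hj j).1

theorem fderiv_smul_complexify_apply {f : ℝ → ℂ} {f' : ℂ} (p X : ℝ × EuclideanSpace ℝ ι)
    (hf : HasDerivAt f f' p.1) :
    fderiv ℝ (fun q : ℝ × EuclideanSpace ℝ ι => f q.1 • complexify q.2) p X
      = f p.1 • complexify X.2 + f' • complexify (X.1 • p.2) := by
  have hd : HasFDerivAt (fun q : ℝ × EuclideanSpace ℝ ι => f q.1 • complexify q.2) _ p :=
    (hf.hasFDerivAt.comp p hasFDerivAt_fst).smul (complexify.hasFDerivAt.comp p hasFDerivAt_snd)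
  rw [hd.fderiv]
  simp [mul_comm _ f', mul_smul, Complex.coe_smul]

end Complexify

noncomputable def whitneyFactor (t : ℝ) : ℂ := (1 - t * I)⁻¹

theorem one_sub_ofReal_mul_I_ne_zero (t : ℝ) : 1 - (t : ℂ) * I ≠ 0 := fun h => by
  simpa using congrArg re h

theorem div_one_add_sq_eq_whitneyFactor (t : ℝ) :
    (1 + (t : ℂ) * I) / (1 + (t : ℂ) ^ 2) = whitneyFactor t := by
  have h : (1 - (t : ℂ) * I) * (1 + t * I) = 1 + (t : ℂ) ^ 2 := by ring_nf; rw [I_sq]; ring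
  rw [whitneyFactor, ← h, div_mul_cancel_right₀ fun h => by simpa using congrArg re h]

theorem hasDerivAt_whitneyFactor (t : ℝ) :
    HasDerivAt whitneyFactor (I * whitneyFactor t ^ 2) t := by
  have h : HasDerivAt (fun z : ℂ => 1 - z * I) (-I) t := by
    simpa using ((hasDerivAt_id (t : ℂ)).mul_const I).const_sub 1
  convert (h.inv (one_sub_ofReal_mul_I_ne_zero t)).comp_ofReal using 1
  · rfl
  · rw [whitneyFactor, neg_neg, div_eq_mul_inv, inv_pow]

theorem im_conj_whitneyFactor_mul_deriv_pos (t : ℝ) :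
    0 < (conj (whitneyFactor t) * (I * whitneyFactor t ^ 2)).im := by
  have hre : 0 < (whitneyFactor t).re := by
    rw [whitneyFactor, inv_re]
    have := normSq_pos.2 (one_sub_ofReal_mul_I_ne_zero t)
    simp only [sub_re, one_re, re_ofReal_mul, I_re, mul_zero, sub_zero]
    positivity
  have : (conj (whitneyFactor t) * (I * whitneyFactor t ^ 2)).im
      = ((whitneyFactor t).re ^ 2 + (whitneyFactor t).im ^ 2) * (whitneyFactor t).re := by
    simp only [mul_im, mul_re, I_re, I_im, conj_re, conj_im, pow_two]; ring
  rw [this]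
  positivity

/-- The Whitney map `w : Sⁿ → ℂⁿ`, `w(y₀, y) = ((1 + i y₀)/(1 + y₀²)) · y`, is an
immersion of the unit sphere `y₀² + |y|² = 1` into `ℂⁿ` (its differential is injective on
each tangent space of the sphere), and it is Lagrangian: the Kähler form
`ω(u, v) = Re⟨i u, v⟩` vanishes on the image of each tangent space. -/
theorem whitney_sphere_lagrangian_immersion (n : ℕ)
    (p : ℝ × EuclideanSpace ℝ (Fin n)) (hp : p.1 ^ 2 + ‖p.2‖ ^ 2 = 1) :
    let W : ℝ × EuclideanSpace ℝ (Fin n) → EuclideanSpace ℂ (Fin n) :=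
      fun q => WithLp.toLp 2 (fun j => ((1 + (q.1 : ℂ) * Complex.I) / (1 + (q.1 : ℂ) ^ 2)) * (q.2 j : ℂ))
    (∀ X : ℝ × EuclideanSpace ℝ (Fin n),
        p.1 * X.1 + (inner ℝ p.2 X.2 : ℝ) = 0 → fderiv ℝ W p X = 0 → X = 0) ∧
    (∀ X Y : ℝ × EuclideanSpace ℝ (Fin n),
        p.1 * X.1 + (inner ℝ p.2 X.2 : ℝ) = 0 → p.1 * Y.1 + (inner ℝ p.2 Y.2 : ℝ) = 0 →
        ((inner ℂ (Complex.I • fderiv ℝ W p X) (fderiv ℝ W p Y) : ℂ)).re = 0) := by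
  intro W
  have hW : W = fun q => whitneyFactor q.1 • complexify q.2 := by
    funext q; ext j; simp [W, div_one_add_sq_eq_whitneyFactor]
  have hdW (X : ℝ × EuclideanSpace ℝ (Fin n)) : fderiv ℝ W p X
      = whitneyFactor p.1 • complexify X.2 + (I * whitneyFactor p.1 ^ 2) • complexify (X.1 • p.2) :=
    hW ▸ fderiv_smul_complexify_apply p X (hasDerivAt_whitneyFactor p.1)
  refine ⟨fun X hX hX0 => ?_, fun X Y hX hY => ?_⟩
  · obtain ⟨hX2, hX1p⟩ := eq_zero_of_smul_complexify_add_eq_zero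
      (im_conj_whitneyFactor_mul_deriv_pos p.1).ne' ((hdW X).symm.trans hX0)
    refine Prod.ext ?_ hX2
    rcases smul_eq_zero.1 hX1p with hX1 | hp2
    · exact hX1
    · have hp1 : p.1 ^ 2 = 1 := by simpa [hp2] using hp
      have hpX : p.1 * X.1 = 0 := by simpa [hp2] using hX
      simpa [show p.1 ≠ 0 by rintro h; simp [h] at hp1] using hpX
  · rw [hdW, hdW, re_inner_I_smul_complexify_add, inner_smul_right, real_inner_smul_left,
      real_inner_comm p.2]
    linear_combination
      (conj (whitneyFactor p.1) * (I * whitneyFactor p.1 ^ 2)).im * (Y.1 * hX - X.1 * hY)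
end

section
/- Let z: I → ℂ\{0} be a unit speed curve and x: M^{n−1} → S^{m−1}(1) ⊂ ℝ^m a spherical isometric immersion of a Riemannian (n−1)-manifold. Then the complex extensor τ: I × M^{n−1} → ℂ^m, τ(s,u) = z(s)·x(u) = (z(s)x_1(u), ..., z(s)x_m(u)), is a totally real immersion: for all tangent vectors X, Y to I × M^{n−1}, the Kähler form of ℂ^m vanishes on (dτ(X), dτ(Y)). -/
/-!
View `x(u)` as a real vector inside `ℂᵐ`, so that `τ(s,u) = z(s) • x(u)` and
`dτ(X) = z • dx(X₂) + X₁ z' • x`. The Kähler form is `ω(A,B) = Im ⟨A,B⟩`, and for real vectors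
`⟨α • p, β • q⟩ = conj α * β * ⟨p,q⟩`. The two diagonal terms of `Im ⟨dτ X, dτ Y⟩` carry the real
coefficients `conj z * z` and `X₁ Y₁ |z'|²`, and the two cross terms contain `⟨x, dx(·)⟩`, which
vanishes because `x` takes values in a sphere.
-/

open Complex ComplexConjugate RealInnerProductSpace

theorem inner_fderiv_eq_zero_of_norm_eq_const_s12 {E F : Type*} [NormedAddCommGroup E]
    [NormedSpace ℝ E] [NormedAddCommGroup F] [InnerProductSpace ℝ F] {x : E → F} {r : ℝ}
    (hxr : ∀ u, ‖x u‖ = r) {u : E} (hx : DifferentiableAt ℝ x u) (v : E) :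
    ⟪x u, fderiv ℝ x u v⟫ = 0 := by
  have hderiv : fderiv ℝ (fun u => ‖x u‖ ^ 2) u = 2 • (innerSL ℝ (x u)).comp (fderiv ℝ x u) :=
    hx.hasFDerivAt.norm_sq.fderiv
  simp only [hxr, fderiv_const_apply] at hderiv
  simpa using (congrArg (· v) hderiv).symm

theorem Complex.re_inner_I_smul_left {V : Type*} [NormedAddCommGroup V] [InnerProductSpace ℂ V]
    (A B : V) : (inner ℂ (I • A) B).re = (inner ℂ A B).im := by
  simp

namespace EuclideanSpace

variable (ι : Type*) [Fintype ι]

noncomputable def ofRealCLM : EuclideanSpace ℝ ι →L[ℝ] EuclideanSpace ℂ ι :=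
  LinearMap.toContinuousLinearMap
    { toFun := fun p => WithLp.toLp 2 fun j => (p j : ℂ)
      map_add' := fun p q => by ext j; simp
      map_smul' := fun r p => by ext j; simp }

variable {ι}

@[simp]
theorem ofRealCLM_apply (p : EuclideanSpace ℝ ι) (j : ι) : ofRealCLM ι p j = (p j : ℂ) := rfl

theorem inner_smul_ofRealCLM_smul_ofRealCLM (a b : ℂ) (p q : EuclideanSpace ℝ ι) :
    inner ℂ (a • ofRealCLM ι p) (b • ofRealCLM ι q) = conj a * b * (⟪p, q⟫ : ℂ) := by
  simp [PiLp.inner_apply, mul_assoc, mul_comm]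

theorem fderiv_smul_ofRealCLM_apply {E : Type*} [NormedAddCommGroup E] [NormedSpace ℝ E]
    {z : ℝ → ℂ} {x : E → EuclideanSpace ℝ ι} {q : ℝ × E} (hz : DifferentiableAt ℝ z q.1)
    (hx : DifferentiableAt ℝ x q.2) (W : ℝ × E) :
    fderiv ℝ (fun q : ℝ × E => z q.1 • ofRealCLM ι (x q.2)) q W =
      z q.1 • ofRealCLM ι (fderiv ℝ x q.2 W.2) + (W.1 • deriv z q.1) • ofRealCLM ι (x q.2) := by
  have hz' := hz.hasDerivAt.hasFDerivAt.comp q hasFDerivAt_fst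
  have hx' := (ofRealCLM ι).hasFDerivAt.comp q (hx.hasFDerivAt.comp q hasFDerivAt_snd)
  have hτ : HasFDerivAt (fun q : ℝ × E => z q.1 • ofRealCLM ι (x q.2)) _ q := hz'.smul hx'
  simp [hτ.fderiv]

theorem im_inner_add_smul_ofRealCLM_eq_zero (a b : ℂ) (s t : ℝ) {p v w : EuclideanSpace ℝ ι}
    (hv : ⟪p, v⟫ = 0) (hw : ⟪p, w⟫ = 0) :
    (inner ℂ (a • ofRealCLM ι v + (s • b) • ofRealCLM ι p)
      (a • ofRealCLM ι w + (t • b) • ofRealCLM ι p)).im = 0 := by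
  simp only [inner_add_left, inner_add_right, inner_smul_ofRealCLM_smul_ofRealCLM,
    real_inner_comm p v, hv, hw]
  simp only [add_im, mul_im, mul_re, conj_re, conj_im, ofReal_re, ofReal_im, smul_re, smul_im,
    smul_eq_mul]
  ring

end EuclideanSpace

theorem complex_extensor_totally_real_general (m : ℕ)
    {E : Type*} [NormedAddCommGroup E] [NormedSpace ℝ E]
    (z : ℝ → ℂ) (x : E → EuclideanSpace ℝ (Fin m))
    (hz : Differentiable ℝ z)
    (hx : Differentiable ℝ x) (hxs : ∀ u, ‖x u‖ = 1) :
    let τ : ℝ × E → EuclideanSpace ℂ (Fin m) :=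
      fun q => WithLp.toLp 2 (fun j => z q.1 * (x q.2 j : ℂ))
    ∀ (q : ℝ × E) (X Y : ℝ × E),
      ((inner ℂ (Complex.I • fderiv ℝ τ q X) (fderiv ℝ τ q Y) : ℂ)).re = 0 := by
  intro τ q X Y
  have hτ : τ = fun q : ℝ × E => z q.1 • EuclideanSpace.ofRealCLM (Fin m) (x q.2) := rfl
  rw [re_inner_I_smul_left, hτ, EuclideanSpace.fderiv_smul_ofRealCLM_apply (hz _) (hx _),
    EuclideanSpace.fderiv_smul_ofRealCLM_apply (hz _) (hx _)]
  exact EuclideanSpace.im_inner_add_smul_ofRealCLM_eq_zero _ _ _ _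
    (inner_fderiv_eq_zero_of_norm_eq_const_s12 hxs (hx _) _)
    (inner_fderiv_eq_zero_of_norm_eq_const_s12 hxs (hx _) _)

/-- Let `z : ℝ → ℂ \ {0}` be a unit speed curve and `x : M^{n-1} → S^{m-1}(1) ⊂ ℝᵐ` a
spherical isometric immersion (expressed in local coordinates on a chart `E` of the
Riemannian `(n-1)`-manifold `M^{n-1}`).  Then the complex extensor
`τ(s,u) = z(s)·x(u)` is totally real: the Kähler form `ω(u,v) = Re⟨i u, v⟩` of `ℂᵐ`
vanishes on the image of each tangent space. -/
theorem complex_extensor_totally_real (m : ℕ)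
    {E : Type*} [NormedAddCommGroup E] [NormedSpace ℝ E]
    (z : ℝ → ℂ) (x : E → EuclideanSpace ℝ (Fin m))
    (hz : Differentiable ℝ z) (hz0 : ∀ s, z s ≠ 0) (hunit : ∀ s, ‖deriv z s‖ = 1)
    (hx : Differentiable ℝ x) (hxs : ∀ u, ‖x u‖ = 1) :
    let τ : ℝ × E → EuclideanSpace ℂ (Fin m) :=
      fun q => WithLp.toLp 2 (fun j => z q.1 * (x q.2 j : ℂ))
    ∀ (q : ℝ × E) (X Y : ℝ × E),
      ((inner ℂ (Complex.I • fderiv ℝ τ q X) (fderiv ℝ τ q Y) : ℂ)).re = 0 :=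
  complex_extensor_totally_real_general m z x hz hx hxs
end

section
/- For a Lagrangian H-umbilical submanifold, the frame condition σ(e_1,e_1)=λJe_1, σ(e_j,e_j)=μJe_1 (j≥2), σ(e_1,e_j)=μJe_j (j≥2), σ(e_j,e_k)=0 (j≠k, j,k≥2) with mean curvature vector H⃗ ≠ 0 is equivalent to the frame-free identity σ(X,Y) = α⟨JX,H⃗⟩⟨JY,H⃗⟩H⃗ + β⟨H⃗,H⃗⟩(⟨X,Y⟩H⃗ + ⟨JX,H⃗⟩JY + ⟨JY,H⃗⟩JX), where α = (λ−3μ)/γ³, β = μ/γ³, γ = (λ+(n−1)μ)/n. -/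
open scoped RealInnerProductSpace

/-!
The frame-free right-hand side `umbilicalForm J H α β` is homogeneous of degree three in `H`.
A frame `e` satisfies the frame conditions with constants `λ, μ` exactly when
`σ = umbilicalForm J (J e₁) (λ - 3μ) μ`, and taking the trace in such a frame gives `H = γ J e₁`;
scaling `J e₁` to `H` divides the coefficients by `γ³`. Conversely, given the frame-free
identity, complete `e₁ = J⁻¹(H / ‖H‖)` to an orthonormal frame and scale back.
-/

theorem OrthonormalBasis.exists_apply_eq {𝕜 E ι : Type*} [RCLike 𝕜] [NormedAddCommGroup E]
    [InnerProductSpace 𝕜 E] [Fintype ι] (b : OrthonormalBasis ι 𝕜 E) (z : ι) {u : E}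
    (hu : ‖u‖ = 1) : ∃ e : OrthonormalBasis ι 𝕜 E, e z = u := by
  have : FiniteDimensional 𝕜 E := b.toBasis.finiteDimensional_of_finite
  have hu' : Orthonormal 𝕜 (({z} : Set ι).domRestrict fun _ => u) :=
    orthonormal_subsingleton_iff.mpr fun _ => hu
  obtain ⟨e, he⟩ :=
    hu'.exists_orthonormalBasis_extension_of_card_eq (Module.finrank_eq_card_basis b.toBasis)
  exact ⟨e, he z rfl⟩

theorem OrthonormalBasis.sum_apply_self_eq {T P ι ι' : Type*} [NormedAddCommGroup T]
    [InnerProductSpace ℝ T] [AddCommGroup P] [Module ℝ P] [Fintype ι] [Fintype ι']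
    (σ : T →ₗ[ℝ] T →ₗ[ℝ] P) (b : OrthonormalBasis ι ℝ T) (e : OrthonormalBasis ι' ℝ T) :
    ∑ i, σ (b i) (b i) = ∑ j, σ (e j) (e j) :=
  calc ∑ i, σ (b i) (b i) = ∑ i, ∑ j, σ (⟪b i, e j⟫ • b i) (e j) := by
        refine Finset.sum_congr rfl fun i _ => ?_
        conv_lhs => arg 2; rw [← e.sum_repr' (b i)]
        simp only [map_sum, map_smul, LinearMap.smul_apply, real_inner_comm]
    _ = ∑ j, σ (e j) (e j) := by
        rw [Finset.sum_comm]
        refine Finset.sum_congr rfl fun j _ => ?_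
        rw [← LinearMap.sum_apply, ← map_sum, b.sum_repr']

section HUmbilical

variable {T Nr : Type*} [NormedAddCommGroup T] [InnerProductSpace ℝ T]
  [NormedAddCommGroup Nr] [InnerProductSpace ℝ Nr]

def umbilicalForm (J : T →ₗᵢ[ℝ] Nr) (H : Nr) (p q : ℝ) : T →ₗ[ℝ] T →ₗ[ℝ] Nr :=
  LinearMap.mk₂ ℝ
    (fun X Y => (p * ⟪J X, H⟫ * ⟪J Y, H⟫) • H +
      (q * ⟪H, H⟫) • (⟪X, Y⟫ • H + ⟪J X, H⟫ • J Y + ⟪J Y, H⟫ • J X))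
    (fun X X' Y => by simp only [map_add, inner_add_left]; module)
    (fun c X Y => by simp only [map_smul, real_inner_smul_left]; module)
    (fun X Y Y' => by simp only [map_add, inner_add_left, inner_add_right]; module)
    (fun c X Y => by simp only [map_smul, real_inner_smul_left, real_inner_smul_right]; module)

variable (J : T →ₗᵢ[ℝ] Nr)

@[simp]
theorem umbilicalForm_apply (H : Nr) (p q : ℝ) (X Y : T) :
    umbilicalForm J H p q X Y = (p * ⟪J X, H⟫ * ⟪J Y, H⟫) • H +
      (q * ⟪H, H⟫) • (⟪X, Y⟫ • H + ⟪J X, H⟫ • J Y + ⟪J Y, H⟫ • J X) :=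
  rfl

theorem umbilicalForm_smul (c : ℝ) (H : Nr) (p q : ℝ) :
    umbilicalForm J (c • H) p q = umbilicalForm J H (c ^ 3 * p) (c ^ 3 * q) := by
  ext X Y
  simp only [umbilicalForm_apply, real_inner_smul_left, real_inner_smul_right]
  module

theorem umbilicalForm_map_apply_of_norm_eq_one {u : T} (hu : ‖u‖ = 1) (p q : ℝ) (X Y : T) :
    umbilicalForm J (J u) p q X Y =
      (p * ⟪X, u⟫ * ⟪Y, u⟫) • J u + q • (⟪X, Y⟫ • J u + ⟪X, u⟫ • J Y + ⟪Y, u⟫ • J X) := by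
  simp [LinearIsometry.inner_map_map, hu]

variable {ι : Type*} [Fintype ι]

def IsHUmbilicalFrame (σ : T →ₗ[ℝ] T →ₗ[ℝ] Nr) (e : OrthonormalBasis ι ℝ T) (z : ι)
    (lam mu : ℝ) : Prop :=
  σ (e z) (e z) = lam • J (e z) ∧ (∀ j, j ≠ z → σ (e j) (e j) = mu • J (e z)) ∧
    (∀ j, j ≠ z → σ (e z) (e j) = mu • J (e j)) ∧
    (∀ j k, j ≠ k → j ≠ z → k ≠ z → σ (e j) (e k) = 0)

variable {J} {σ : T →ₗ[ℝ] T →ₗ[ℝ] Nr} {e : OrthonormalBasis ι ℝ T} {z : ι}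

theorem IsHUmbilicalFrame.sum_apply_self {lam mu : ℝ}
    (h : IsHUmbilicalFrame J σ e z lam mu) :
    ∑ i, σ (e i) (e i) = (lam + (Fintype.card ι - 1 : ℝ) * mu) • J (e z) := by
  classical
  obtain ⟨h_zz, h_jj, -, -⟩ := h
  rw [← Finset.add_sum_erase _ _ (Finset.mem_univ z), h_zz,
    Finset.sum_congr rfl fun j hj => h_jj j (Finset.ne_of_mem_erase hj), Finset.sum_const,
    Finset.card_erase_of_mem (Finset.mem_univ z), Finset.card_univ, ← Nat.cast_smul_eq_nsmul ℝ,
    Nat.cast_pred (Fintype.card_pos_iff.mpr ⟨z⟩), smul_smul, ← add_smul]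

theorem IsHUmbilicalFrame.eq_umbilicalForm (hσ : ∀ X Y, σ X Y = σ Y X) {lam mu : ℝ}
    (h : IsHUmbilicalFrame J σ e z lam mu) :
    σ = umbilicalForm J (J (e z)) (lam - 3 * mu) mu := by
  classical
  obtain ⟨h_zz, h_jj, h_zj, h_jk⟩ := h
  refine LinearMap.ext_basis e.toBasis e.toBasis fun j k => ?_
  simp only [OrthonormalBasis.coe_toBasis,
    umbilicalForm_map_apply_of_norm_eq_one J (e.norm_eq_one z), e.inner_eq_ite]
  by_cases hj : j = z <;> by_cases hk : k = z
  · rw [hj, hk, h_zz]; simp only [↓reduceIte, mul_one, one_smul]; module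
  · rw [hj, h_zj k hk]; simp [hk, Ne.symm hk]
  · rw [hk, hσ, h_zj j hj]; simp [hj]
  · by_cases hjk : j = k
    · rw [← hjk, h_jj j hj]; simp [hj]
    · rw [h_jk j k hjk hj hk]; simp [hjk, hj, hk]

theorem isHUmbilicalFrame_of_eq_umbilicalForm {p q : ℝ}
    (h : σ = umbilicalForm J (J (e z)) p q) : IsHUmbilicalFrame J σ e z (p + 3 * q) q := by
  classical
  subst h
  simp only [IsHUmbilicalFrame, umbilicalForm_map_apply_of_norm_eq_one J (e.norm_eq_one _),
    e.inner_eq_ite]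
  refine ⟨by simp only [↓reduceIte, mul_one, one_smul]; module, fun j hj => by simp [hj],
    fun j hj => by simp [hj, Ne.symm hj], fun j k hjk hj hk => by simp [hjk, hj, hk]⟩

end HUmbilical

/-- For a Lagrangian `H`-umbilical submanifold (pointwise linear-algebra model: tangent
space `T` with orthonormal basis, normal space `Nr`, complex structure `J : T ≃ N`,
symmetric bilinear second fundamental form `σ`, mean curvature vector
`H = (1/n) Σ σ(eᵢ,eᵢ) ≠ 0`), the frame condition
`σ(e₁,e₁)=λJe₁, σ(eⱼ,eⱼ)=μJe₁, σ(e₁,eⱼ)=μJeⱼ, σ(eⱼ,eₖ)=0 (j≠k)` is equivalent to the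
frame-free identity
`σ(X,Y) = α⟨JX,H⟩⟨JY,H⟩H + β⟨H,H⟩(⟨X,Y⟩H + ⟨JX,H⟩JY + ⟨JY,H⟩JX)` with
`α = (λ-3μ)/γ³`, `β = μ/γ³`, `γ = (λ+(n-1)μ)/n`. -/
theorem lagrangian_H_umbilical_frame_free_characterization
    {T Nr : Type*} [NormedAddCommGroup T] [InnerProductSpace ℝ T]
    [NormedAddCommGroup Nr] [InnerProductSpace ℝ Nr]
    (n : ℕ) (hn : 0 < n)
    (J : T ≃ₗᵢ[ℝ] Nr) (σ : T →ₗ[ℝ] T →ₗ[ℝ] Nr) (hσ : ∀ X Y, σ X Y = σ Y X)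
    (b : OrthonormalBasis (Fin n) ℝ T)
    (H : Nr) (hHdef : H = (n : ℝ)⁻¹ • ∑ i : Fin n, σ (b i) (b i)) (hH : H ≠ 0) :
    (∃ e : OrthonormalBasis (Fin n) ℝ T, ∃ lam mu : ℝ,
        σ (e ⟨0, hn⟩) (e ⟨0, hn⟩) = lam • J (e ⟨0, hn⟩) ∧
        (∀ j : Fin n, j ≠ ⟨0, hn⟩ → σ (e j) (e j) = mu • J (e ⟨0, hn⟩)) ∧
        (∀ j : Fin n, j ≠ ⟨0, hn⟩ → σ (e ⟨0, hn⟩) (e j) = mu • J (e j)) ∧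
        (∀ j k : Fin n, j ≠ k → j ≠ ⟨0, hn⟩ → k ≠ ⟨0, hn⟩ → σ (e j) (e k) = 0)) ↔
    (∃ lam mu : ℝ,
        ((lam + ((n : ℝ) - 1) * mu) / n) ≠ 0 ∧
        ∀ X Y : T,
          σ X Y =
            (((lam - 3 * mu) / ((lam + ((n : ℝ) - 1) * mu) / n) ^ 3) *
                (inner ℝ (J X) H : ℝ) * (inner ℝ (J Y) H : ℝ)) • H +
              ((mu / ((lam + ((n : ℝ) - 1) * mu) / n) ^ 3) * (inner ℝ H H : ℝ)) •
                ((inner ℝ X Y : ℝ) • H + (inner ℝ (J X) H : ℝ) • J Y +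
                  (inner ℝ (J Y) H : ℝ) • J X)) := by
  let z : Fin n := ⟨0, hn⟩
  constructor
  · rintro ⟨e, lam, mu, hframe⟩
    set γ : ℝ := (lam + ((n : ℝ) - 1) * mu) / n
    have hHe : H = γ • J (e z) := by
      rw [hHdef, b.sum_apply_self_eq σ e,
        IsHUmbilicalFrame.sum_apply_self (J := J.toLinearIsometry) hframe, Fintype.card_fin,
        LinearIsometryEquiv.coe_toLinearIsometry, smul_smul, inv_mul_eq_div]
    have hγ : γ ≠ 0 := by
      rintro hγ
      exact hH (by rw [hHe, hγ, zero_smul])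
    have hform : umbilicalForm J.toLinearIsometry H ((lam - 3 * mu) / γ ^ 3) (mu / γ ^ 3) =
        umbilicalForm J.toLinearIsometry (J (e z)) (lam - 3 * mu) mu := by
      rw [hHe, umbilicalForm_smul]
      congr 1 <;> field_simp
    refine ⟨lam, mu, hγ, fun X Y => ?_⟩
    rw [IsHUmbilicalFrame.eq_umbilicalForm (J := J.toLinearIsometry) hσ hframe]
    exact congr($hform.symm X Y)
  · rintro ⟨lam, mu, -, hσH⟩
    have hHe : H = ‖H‖ • J (J.symm (‖H‖⁻¹ • H)) := by
      rw [J.apply_symm_apply, smul_smul, mul_inv_cancel₀ (norm_ne_zero_iff.mpr hH), one_smul]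
    obtain ⟨e, he⟩ := b.exists_apply_eq z (u := J.symm (‖H‖⁻¹ • H)) (by simp [norm_smul, hH])
    have hform := LinearMap.ext₂ (g := umbilicalForm J.toLinearIsometry H _ _) hσH
    rw [hHe, umbilicalForm_smul, ← he] at hform
    exact ⟨e, _, _, isHUmbilicalFrame_of_eq_umbilicalForm hform⟩
end
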